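/- Let 𝕜 be a field whose characteristic does not divide n!·|G|^n, where G is a finite group and n ≥ 1, and let k ∈ ℕ. An endomorphism θ ∈ End_𝕜(V^{⊗k}) commutes with Φ(P,g) for every G-partition (P,g) of type (k;k) if and only if θ is the action of some element of the group algebra 𝕜[G_n], i.e., θ lies in the image of the algebra homomorphism 𝕜[G_n] → End_𝕜(V^{⊗k}). -/

import Mathlib

/-!
Statement 14 (double centralizer): let `𝕜` be a field whose characteristic does not
divide `n! · |G|^n = |G_n|`.  An endomorphism `θ` of `V^{⊗k}` commutes with `Φ(P,g)` for
every `G`-partition `(P,g)` of type `(k; k)` if and only if `θ` lies in the image of the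
canonical algebra homomorphism `𝕜[G_n] → End_𝕜(V^{⊗k})` induced by the diagonal action.
-/

namespace GPC

variable (G : Type*) [Group G]

def wreathAut (n : ℕ) : Equiv.Perm (Fin n) →* MulAut (Fin n → G) where
  toFun π :=
    { toFun := fun g => g ∘ ⇑π⁻¹
      invFun := fun g => g ∘ ⇑π
      left_inv := fun g => by funext i; simp
      right_inv := fun g => by funext i; simp
      map_mul' := fun g h => rfl }
  map_one' := by ext g i; simp
  map_mul' := fun π σ => by ext g i; simp

/-- The wreath product `G_n = Gⁿ ⋊ S_n`. -/
abbrev Wr (n : ℕ) := (Fin n → G) ⋊[wreathAut G n] Equiv.Perm (Fin n)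

variable {G}

/-- Equivalence of `G`-partitions with the same underlying partition `P`
(a set partition is encoded as a `Setoid`, whose classes are the parts):
`(P, g) ∼ (P, g')` iff for every part there is `t ∈ G` with `g' = t * g` on that part. -/
def LabelEquiv {X : Type*} (P : Setoid X) (g g' : X → G) : Prop :=
  ∀ a : X, ∃ t : G, ∀ b : X, P a b → g' b = t * g b

/-- The number of parts of a set partition (encoded as a `Setoid`). -/
noncomputable def numParts {X : Type*} (P : Setoid X) : ℕ := Nat.card (Quotient P)

variable (G) in
/-- The image of the basis vector `g e_i` of `V` under the action of `γ ∈ G_n`: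
`(h π) · (g e_i) = h_{π i} g e_{π i}`. -/
def actBasis (n : ℕ) (γ : Wr G n) (p : G × Fin n) : G × Fin n :=
  (γ.left (γ.right p.2) * p.1, γ.right p.2)

variable (𝕜 : Type*) [CommRing 𝕜] (G) (n : ℕ)

/-- The diagonal action of `γ ∈ G_n` on `V^{⊗k}`, realized on the standard basis
of `V^{⊗k}` given by `k`-tuples of basis vectors of `V`. -/
noncomputable def dAct (k : ℕ) (γ : Wr G n) :
    ((Fin k → G × Fin n) →₀ 𝕜) →ₗ[𝕜] ((Fin k → G × Fin n) →₀ 𝕜) :=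
  Finsupp.lmapDomain 𝕜 𝕜 (fun v j => actBasis G n γ (v j))

variable [Fintype G]

open scoped Classical in
/-- The matrix-entry condition defining `Φ(P, g)`: the entry at `(w, v)` is `1`
iff for all `a, b` in the same part of `P` the indices agree and
`h_a g_a⁻¹ = h_b g_b⁻¹`, where `(h, i)` is read off from `v` on the bottom row
and from `w` on the top row. -/
def phiCond {k l : ℕ} (P : Setoid (Fin k ⊕ Fin l)) (g : Fin k ⊕ Fin l → G)
    (v : Fin k → G × Fin n) (w : Fin l → G × Fin n) : Prop :=
  ∀ a b : Fin k ⊕ Fin l, P a b →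
    (Sum.elim v w a).2 = (Sum.elim v w b).2
      ∧ (Sum.elim v w a).1 * (g a)⁻¹ = (Sum.elim v w b).1 * (g b)⁻¹

open scoped Classical in
/-- The map `Φ(P, g) : V^{⊗k} → V^{⊗l}` attached to a `G`-partition `(P, g)` of
type `(l; k)`, defined by its matrix entries on the standard bases. -/
noncomputable def Phi {k l : ℕ} (P : Setoid (Fin k ⊕ Fin l)) (g : Fin k ⊕ Fin l → G) :
    ((Fin k → G × Fin n) →₀ 𝕜) →ₗ[𝕜] ((Fin l → G × Fin n) →₀ 𝕜) :=
  Finsupp.lift _ 𝕜 _ fun v => ∑ w : Fin l → G × Fin n,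
    if phiCond G n P g v w then Finsupp.single w (1 : 𝕜) else 0

variable {G}

lemma actBasis_one (n : ℕ) : actBasis G n 1 = id := by
  funext p
  simp [actBasis]

lemma actBasis_mul (n : ℕ) (γ δ : Wr G n) :
    actBasis G n (γ * δ) = actBasis G n γ ∘ actBasis G n δ := by
  funext p
  simp [actBasis, SemidirectProduct.mul_left, SemidirectProduct.mul_right, wreathAut,
    mul_assoc]

variable (G)

/-- The diagonal action of `G_n` on `V^{⊗k}` as a monoid homomorphism into the
endomorphism algebra. -/
noncomputable def dActHom (k : ℕ) : Wr G n →* Module.End 𝕜 ((Fin k → G × Fin n) →₀ 𝕜) where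
  toFun γ := Finsupp.lmapDomain 𝕜 𝕜 (fun v => actBasis G n γ ∘ v)
  map_one' := by
    try simp only []
    rw [actBasis_one]
    simp only [Function.id_comp]
    exact Finsupp.lmapDomain_id 𝕜 𝕜
  map_mul' := fun γ δ => by
    try simp only []
    rw [actBasis_mul]
    have : (fun v : Fin k → G × Fin n => (actBasis G n γ ∘ actBasis G n δ) ∘ v)
        = (fun v : Fin k → G × Fin n => actBasis G n γ ∘ v)
          ∘ (fun v => actBasis G n δ ∘ v) := by
      funext v; rfl
    rw [this, Finsupp.lmapDomain_comp]
    rfl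

/-!
A `G_n`-equivariant endomorphism of `V^{⊗k}` has matrix entries constant on `G_n`-orbits of
pairs of basis tensors. The map `Φ` of the partition and labels read off such a pair `u` is the
indicator of the pairs degenerating from `u`, which is unitriangular with respect to the number
of coinciding indices, so peeling off one level at a time shows that the `Φ(P, g)` span the
commutant of `G_n`. Since `|G_n|` is invertible in `𝕜`, Maschke's theorem makes `V^{⊗k}` a
semisimple `𝕜[G_n]`-module, and the Jacobson density theorem then says that whatever commutes
with this commutant comes from `𝕜[G_n]`. Conversely, `Φ(P, g)` is `G_n`-equivariant because its
defining condition is invariant under the action.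
-/

theorem _root_.MonoidAlgebra.mem_range_lift_of_forall_commute {k Γ W : Type*} [Field k]
    [Group Γ] [Finite Γ] [NeZero (Nat.card Γ : k)] [AddCommGroup W] [Module k W] [Module.Finite k W]
    (ρ : Γ →* Module.End k W) {θ : Module.End k W}
    (hθ : ∀ f : Module.End k W, (∀ γ, Commute f (ρ γ)) → Commute θ f) :
    θ ∈ (MonoidAlgebra.lift k (Module.End k W) Γ ρ).range := by
  let _ : Module (MonoidAlgebra k Γ) W :=
    Module.compHom W (MonoidAlgebra.lift k (Module.End k W) Γ ρ).toRingHom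
  have smul_def (r : MonoidAlgebra k Γ) (m : W) :
      r • m = MonoidAlgebra.lift k (Module.End k W) Γ ρ r m := rfl
  -- `W` is a semisimple `k[Γ]`-module by Maschke's theorem, so Jacobson density applies to `θ`
  -- viewed as an endomorphism over the commutant `End_{k[Γ]} W`.
  let θ' : Module.End (Module.End (MonoidAlgebra k Γ) W) W :=
    { toFun := θ
      map_add' := θ.map_add
      map_smul' := fun f m => by
        let f' : Module.End k W :=
          { toFun := f
            map_add' := f.map_add
            map_smul' := fun c m => by
              simpa [smul_def] using f.map_smul (MonoidAlgebra.single 1 c) m }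
        have hf' : ∀ γ, Commute f' (ρ γ) := fun γ => LinearMap.ext fun w => by
          simpa [smul_def, f'] using f.map_smul (MonoidAlgebra.single γ 1) w
        exact LinearMap.congr_fun (hθ f' hf').eq m }
  obtain ⟨s, hs⟩ := Module.Finite.fg_top (R := k) (M := W)
  obtain ⟨r, hr⟩ := jacobson_density θ' s
  exact ⟨r, LinearMap.ext_on hs fun m hm => (hr m hm).symm⟩

lemma _root_.MonoidAlgebra.commute_lift_of_forall_commute {k Γ A : Type*} [CommSemiring k]
    [Monoid Γ] [Semiring A] [Algebra k A] (ρ : Γ →* A) {a : A} (ha : ∀ γ, Commute (ρ γ) a)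
    (x : MonoidAlgebra k Γ) : Commute (MonoidAlgebra.lift k A Γ ρ x) a := by
  rw [MonoidAlgebra.lift_apply]
  exact Commute.sum_left _ _ _ fun γ _ => (ha γ).smul_left _

lemma _root_.MulAction.exists_smul_out_eq {Γ α : Type*} [Group Γ] [MulAction Γ α] (a : α) :
    ∃ γ : Γ, γ • (⟦a⟧ : MulAction.orbitRel.Quotient Γ α).out = a :=
  (MulAction.orbitRel Γ α).symm' (Quotient.mk_out (s := MulAction.orbitRel Γ α) a)

instance {N H : Type*} [Group N] [Group H] {φ : H →* MulAut N} [Finite N] [Finite H] :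
    Finite (N ⋊[φ] H) :=
  Finite.of_equiv _ SemidirectProduct.equivProd.symm

section Action

open Finsupp

variable {G : Type*} [Group G] {n k : ℕ}

instance : MulAction (Wr G n) (G × Fin n) where
  smul := actBasis G n
  one_smul p := show actBasis G n 1 p = p by simp [actBasis]
  mul_smul γ δ p := show actBasis G n (γ * δ) p = actBasis G n γ (actBasis G n δ p) by
    simp [actBasis, wreathAut, mul_assoc]

lemma smul_snd (γ : Wr G n) (p : G × Fin n) : (γ • p).2 = γ.right p.2 := rfl

lemma smul_fst (γ : Wr G n) (p : G × Fin n) : (γ • p).1 = γ.left (γ.right p.2) * p.1 := rfl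

lemma smul_compat_iff (γ : Wr G n) (p q : G × Fin n) (s t : G) :
    ((γ • p).2 = (γ • q).2 ∧ (γ • p).1 * s = (γ • q).1 * t) ↔ (p.2 = q.2 ∧ p.1 * s = q.1 * t) := by
  rw [smul_snd, smul_snd, smul_fst, smul_fst, γ.right.injective.eq_iff]
  exact and_congr_right fun h => by rw [h, mul_assoc, mul_assoc, mul_right_inj]

lemma phiCond_smul_iff (P : Setoid (Fin k ⊕ Fin k)) (g : Fin k ⊕ Fin k → G) (γ : Wr G n)
    (v w : Fin k → G × Fin n) : phiCond G n P g (γ • v) (γ • w) ↔ phiCond G n P g v w := by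
  have : Sum.elim (γ • v) (γ • w) = γ • Sum.elim v w := by
    funext a
    cases a <;> rfl
  simp only [phiCond, this, Pi.smul_apply, smul_compat_iff]

variable [Fintype G] {𝕜 : Type*} [CommRing 𝕜]

lemma dActHom_single (γ : Wr G n) (v : Fin k → G × Fin n) (c : 𝕜) :
    dActHom G 𝕜 n k γ (single v c) = single (γ • v) c :=
  mapDomain_single

lemma dActHom_apply (γ : Wr G n) (x : (Fin k → G × Fin n) →₀ 𝕜) (v : Fin k → G × Fin n) :
    dActHom G 𝕜 n k γ x v = x (γ⁻¹ • v) := by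
  conv_lhs => rw [← smul_inv_smul γ v]
  exact mapDomain_apply (MulAction.injective γ) x _

end Action

section Entries

open Finsupp

variable {G : Type*} {𝕜 : Type*} [CommRing 𝕜] {n k : ℕ}

/-- The matrix entry of an endomorphism of `V^{⊗k}` at the pair of basis tensors encoded by `m`:
the column is `m ∘ inl`, the row is `m ∘ inr`. -/
noncomputable def entry (m : Fin k ⊕ Fin k → G × Fin n) :
    Module.End 𝕜 ((Fin k → G × Fin n) →₀ 𝕜) →ₗ[𝕜] 𝕜 :=
  lapply (m ∘ Sum.inr) ∘ₗ LinearMap.applyₗ (single (m ∘ Sum.inl) 1)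

lemma entry_apply (m : Fin k ⊕ Fin k → G × Fin n)
    (φ : Module.End 𝕜 ((Fin k → G × Fin n) →₀ 𝕜)) :
    entry m φ = φ (single (m ∘ Sum.inl) 1) (m ∘ Sum.inr) := rfl

lemma ext_entry {φ ψ : Module.End 𝕜 ((Fin k → G × Fin n) →₀ 𝕜)}
    (h : ∀ m : Fin k ⊕ Fin k → G × Fin n, entry m φ = entry m ψ) : φ = ψ :=
  lhom_ext' fun v => LinearMap.ext_ring <| Finsupp.ext fun w => h (Sum.elim v w)

variable [Group G] [Fintype G]

open scoped Classical in
lemma entry_Phi (P : Setoid (Fin k ⊕ Fin k)) (g : Fin k ⊕ Fin k → G)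
    (m : Fin k ⊕ Fin k → G × Fin n) :
    entry m (Phi G 𝕜 n P g) = if phiCond G n P g (m ∘ Sum.inl) (m ∘ Sum.inr) then 1 else 0 := by
  rw [entry_apply, Phi, lift_apply, sum_single_index (by simp), one_smul, finsetSum_apply,
    Finset.sum_eq_single (m ∘ Sum.inr) (fun w _ hw => by split_ifs <;> simp [hw]) (by simp)]
  split_ifs <;> simp

lemma forall_commute_dActHom_iff {φ : Module.End 𝕜 ((Fin k → G × Fin n) →₀ 𝕜)} :
    (∀ γ, Commute φ (dActHom G 𝕜 n k γ)) ↔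
      ∀ (γ : Wr G n) (m : Fin k ⊕ Fin k → G × Fin n), entry (γ • m) φ = entry m φ := by
  constructor
  · intro h γ m
    change φ (single (γ • (m ∘ Sum.inl)) 1) (γ • (m ∘ Sum.inr)) = entry m φ
    rw [← dActHom_single, ← Module.End.mul_apply, (h γ).eq, Module.End.mul_apply,
      dActHom_apply, inv_smul_smul, entry_apply]
  · refine fun h γ => ext_entry fun m => ?_
    have key := h γ⁻¹ (Sum.elim (γ • (m ∘ Sum.inl)) (m ∘ Sum.inr))
    change φ (single (γ⁻¹ • γ • (m ∘ Sum.inl)) 1) (γ⁻¹ • (m ∘ Sum.inr)) =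
      φ (single (γ • (m ∘ Sum.inl)) 1) (m ∘ Sum.inr) at key
    rw [inv_smul_smul] at key
    rw [entry_apply, entry_apply, Module.End.mul_apply, Module.End.mul_apply, dActHom_single,
      dActHom_apply, key]

open scoped Classical in
lemma commute_Phi_dActHom (P : Setoid (Fin k ⊕ Fin k)) (g : Fin k ⊕ Fin k → G) (γ : Wr G n) :
    Commute (Phi G 𝕜 n P g) (dActHom G 𝕜 n k γ) := by
  refine forall_commute_dActHom_iff.2 (fun γ m => ?_) γ
  rw [entry_Phi, entry_Phi]
  exact if_congr (phiCond_smul_iff P g γ _ _) rfl rfl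

end Entries

section Configurations

variable {G : Type*} {n k : ℕ}

def coincidences (u : Fin k ⊕ Fin k → G × Fin n) : Finset ((Fin k ⊕ Fin k) × (Fin k ⊕ Fin k)) :=
  {p | (u p.1).2 = (u p.2).2}

lemma mem_coincidences {u : Fin k ⊕ Fin k → G × Fin n} {a b : Fin k ⊕ Fin k} :
    (a, b) ∈ coincidences u ↔ (u a).2 = (u b).2 := by
  simp [coincidences]

variable [Group G]

lemma coincidences_smul (γ : Wr G n) (u : Fin k ⊕ Fin k → G × Fin n) :
    coincidences (γ • u) = coincidences u := by
  ext ⟨a, b⟩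
  simp [mem_coincidences, smul_snd, γ.right.injective.eq_iff]

/-- `m` degenerates from `u`: indices that agree in `u` agree in `m`, and on each such class `m`
is a common left translate of `u` in `G`. -/
def Coarsens (u m : Fin k ⊕ Fin k → G × Fin n) : Prop :=
  ∀ a b, (u a).2 = (u b).2 → (m a).2 = (m b).2 ∧ (m a).1 * (u a).1⁻¹ = (m b).1 * (u b).1⁻¹

lemma phiCond_ker_iff (u m : Fin k ⊕ Fin k → G × Fin n) :
    phiCond G n (Setoid.ker (Prod.snd ∘ u)) (Prod.fst ∘ u) (m ∘ Sum.inl) (m ∘ Sum.inr) ↔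
      Coarsens u m := by
  rw [phiCond, Sum.elim_comp_inl_inr]
  rfl

lemma coarsens_smul_self (γ : Wr G n) (u : Fin k ⊕ Fin k → G × Fin n) : Coarsens u (γ • u) :=
  fun a b h => by simpa [smul_compat_iff] using h

lemma Coarsens.coincidences_subset {u m : Fin k ⊕ Fin k → G × Fin n} (h : Coarsens u m) :
    coincidences u ⊆ coincidences m := fun ⟨a, b⟩ hab =>
  mem_coincidences.2 (h a b (mem_coincidences.1 hab)).1

lemma Coarsens.exists_smul_eq {u m : Fin k ⊕ Fin k → G × Fin n} (h : Coarsens u m)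
    (hsub : coincidences m ⊆ coincidences u) : ∃ γ : Wr G n, γ • u = m := by
  classical
  have hker (a b) : (u a).2 = (u b).2 ↔ (m a).2 = (m b).2 :=
    ⟨fun hab => (h a b hab).1, fun hab => mem_coincidences.1 (hsub (mem_coincidences.2 hab))⟩
  let f : Fin n → Fin n := Function.extend (Prod.snd ∘ u) (Prod.snd ∘ m) id
  have hf (a) : f (u a).2 = (m a).2 :=
    Function.FactorsThrough.extend_apply (fun a b hab => (hker a b).1 hab) id a
  have hinj : Set.InjOn f (Set.range (Prod.snd ∘ u)) := by
    rintro _ ⟨a, rfl⟩ _ ⟨b, rfl⟩ hab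
    exact (hker a b).2 (by simpa [hf] using hab)
  obtain ⟨π, hπ⟩ := Set.MapsTo.exists_equiv_extend_of_card_eq (t := Finset.univ) (by simp)
    (fun _ _ => Finset.mem_coe.2 (Finset.mem_univ _)) hinj
  let σ : Equiv.Perm (Fin n) := π.trans (Equiv.subtypeUnivEquiv Finset.mem_univ)
  have hσ (a) : σ (u a).2 = (m a).2 := (hπ _ ⟨a, rfl⟩).trans (hf a)
  let t : Fin n → G := Function.extend (Prod.snd ∘ m) (fun a => (m a).1 * (u a).1⁻¹) 1
  have ht (a) : t (m a).2 = (m a).1 * (u a).1⁻¹ :=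
    Function.FactorsThrough.extend_apply (fun a b hab => (h a b ((hker a b).2 hab)).2) 1 a
  refine ⟨⟨t, σ⟩, funext fun a => Prod.ext ?_ (hσ a)⟩
  change t (σ (u a).2) * (u a).1 = (m a).1
  rw [hσ, ht, inv_mul_cancel_right]

end Configurations

section Span

open scoped Finset

variable {G : Type*} [Group G] [Fintype G] {𝕜 : Type*} [CommRing 𝕜] {n k : ℕ}

variable (G 𝕜 n k) in
noncomputable def phiSpan : Submodule 𝕜 (Module.End 𝕜 ((Fin k → G × Fin n) →₀ 𝕜)) :=
  Submodule.span 𝕜 (Set.range fun Pg : Setoid (Fin k ⊕ Fin k) × (Fin k ⊕ Fin k → G) =>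
    Phi G 𝕜 n Pg.1 Pg.2)

lemma commute_dActHom_of_mem_phiSpan {φ : Module.End 𝕜 ((Fin k → G × Fin n) →₀ 𝕜)}
    (hφ : φ ∈ phiSpan G 𝕜 n k) (γ : Wr G n) : Commute φ (dActHom G 𝕜 n k γ) :=
  Commute.span_left (by rintro _ ⟨Pg, rfl⟩; exact commute_Phi_dActHom Pg.1 Pg.2 γ) φ hφ

open scoped Classical in
lemma entry_Phi_ker (u m : Fin k ⊕ Fin k → G × Fin n) :
    entry m (Phi G 𝕜 n (Setoid.ker (Prod.snd ∘ u)) (Prod.fst ∘ u)) =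
      if Coarsens u m then 1 else 0 := by
  rw [entry_Phi]
  exact if_congr (phiCond_ker_iff u m) rfl rfl

open scoped Classical in
/-- The combination of the `Φ` read off orbit representatives with exactly `j` coincidences
that agrees with `φ` on those orbits. -/
noncomputable def phiPart (j : ℕ) (φ : Module.End 𝕜 ((Fin k → G × Fin n) →₀ 𝕜)) :
    Module.End 𝕜 ((Fin k → G × Fin n) →₀ 𝕜) :=
  ∑ q : MulAction.orbitRel.Quotient (Wr G n) (Fin k ⊕ Fin k → G × Fin n)
      with #(coincidences q.out) = j,
    entry q.out φ • Phi G 𝕜 n (Setoid.ker (Prod.snd ∘ q.out)) (Prod.fst ∘ q.out)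

lemma phiPart_mem_phiSpan (j : ℕ) (φ : Module.End 𝕜 ((Fin k → G × Fin n) →₀ 𝕜)) :
    phiPart j φ ∈ phiSpan G 𝕜 n k :=
  Submodule.sum_mem _ fun _ _ => Submodule.smul_mem _ _ (Submodule.subset_span ⟨(_, _), rfl⟩)

lemma entry_phiPart {j : ℕ} {φ : Module.End 𝕜 ((Fin k → G × Fin n) →₀ 𝕜)}
    (hφ : ∀ γ, Commute φ (dActHom G 𝕜 n k γ))
    (hvan : ∀ m, #(coincidences m) < j → entry m φ = 0) {m : Fin k ⊕ Fin k → G × Fin n}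
    (hm : #(coincidences m) ≤ j) : entry m (phiPart j φ) = entry m φ := by
  classical
  simp only [phiPart, map_sum, map_smul, entry_Phi_ker, smul_eq_mul, mul_ite, mul_one, mul_zero]
  rcases hm.lt_or_eq with hlt | rfl
  · rw [hvan m hlt]
    refine Finset.sum_eq_zero fun q hq => if_neg fun hc => ?_
    have := Finset.card_le_card hc.coincidences_subset
    rw [(Finset.mem_filter.1 hq).2] at this
    omega
  · obtain ⟨γ, hγ⟩ := MulAction.exists_smul_out_eq (Γ := Wr G n) m
    set u := (⟦m⟧ : MulAction.orbitRel.Quotient (Wr G n) _).out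
    have hcard : #(coincidences u) = #(coincidences m) := by rw [← hγ, coincidences_smul]
    have hu : Coarsens u m := by
      rw [← hγ]
      exact coarsens_smul_self γ u
    have hmem : (⟦m⟧ : MulAction.orbitRel.Quotient (Wr G n) _) ∈
        Finset.univ.filter fun q => #(coincidences q.out) = #(coincidences m) :=
      Finset.mem_filter.2 ⟨Finset.mem_univ _, hcard⟩
    rw [Finset.sum_eq_single_of_mem _ hmem fun q hq hne => if_neg fun hc => hne ?_, if_pos hu,
      ← forall_commute_dActHom_iff.1 hφ γ, hγ]
    -- a degeneration with as many coincidences is a translate, hence in the same orbit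
    obtain ⟨δ, hδ⟩ := hc.exists_smul_eq (Finset.eq_of_subset_of_card_le hc.coincidences_subset
      (Finset.mem_filter.1 hq).2.ge).ge
    exact (Quotient.out_eq q).symm.trans (Quotient.sound ((MulAction.orbitRel _ _).symm' ⟨δ, hδ⟩))

lemma mem_phiSpan_of_entry_eq_zero {j : ℕ}
    (hj : j ≤ Fintype.card ((Fin k ⊕ Fin k) × (Fin k ⊕ Fin k)) + 1) :
    ∀ φ : Module.End 𝕜 ((Fin k → G × Fin n) →₀ 𝕜), (∀ γ, Commute φ (dActHom G 𝕜 n k γ)) →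
      (∀ m, #(coincidences m) < j → entry m φ = 0) → φ ∈ phiSpan G 𝕜 n k := by
  induction hj using Nat.decreasingInduction with
  | self =>
    intro φ _ hvan
    have : φ = 0 := ext_entry fun m =>
      (hvan m (Nat.lt_succ_of_le (Finset.card_le_univ _))).trans (map_zero _).symm
    exact this ▸ zero_mem _
  | of_succ j _ ih =>
    intro φ hφ hvan
    have hψ := phiPart_mem_phiSpan j φ
    have hrest : φ - phiPart j φ ∈ phiSpan G 𝕜 n k := by
      refine ih (φ - phiPart j φ) (fun γ => Commute.sub_left
        (R := Module.End 𝕜 ((Fin k → G × Fin n) →₀ 𝕜)) (hφ γ)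
        (commute_dActHom_of_mem_phiSpan hψ γ)) fun m hm => ?_
      rw [map_sub (entry (𝕜 := 𝕜) m), entry_phiPart hφ hvan (Nat.le_of_lt_succ hm), sub_self]
    exact sub_add_cancel φ (phiPart j φ) ▸ add_mem hrest hψ

theorem mem_phiSpan_of_forall_commute {φ : Module.End 𝕜 ((Fin k → G × Fin n) →₀ 𝕜)}
    (hφ : ∀ γ, Commute φ (dActHom G 𝕜 n k γ)) : φ ∈ phiSpan G 𝕜 n k :=
  mem_phiSpan_of_entry_eq_zero (Nat.zero_le _) φ hφ fun _ h => absurd h (Nat.not_lt_zero _)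

end Span

lemma natCard_wr (G : Type*) [Group G] [Fintype G] (n : ℕ) :
    Nat.card (Wr G n) = n.factorial * Fintype.card G ^ n := by
  simp [Nat.card_eq_fintype_card, Fintype.card_perm, mul_comm]

theorem double_centralizer_general (𝕜 : Type*) [Field 𝕜]
    (G : Type*) [Group G] [Fintype G] (n : ℕ)
    (hchar : ¬ (ringChar 𝕜 ∣ Nat.factorial n * Fintype.card G ^ n)) (k : ℕ)
    (θ : ((Fin k → G × Fin n) →₀ 𝕜) →ₗ[𝕜] ((Fin k → G × Fin n) →₀ 𝕜)) :
    (∀ (P : Setoid (Fin k ⊕ Fin k)) (g : Fin k ⊕ Fin k → G),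
      θ ∘ₗ Phi G 𝕜 n P g = Phi G 𝕜 n P g ∘ₗ θ)
    ↔ θ ∈ (MonoidAlgebra.lift 𝕜 (Module.End 𝕜 ((Fin k → G × Fin n) →₀ 𝕜)) (Wr G n)
            (dActHom G 𝕜 n k)).range := by
  constructor
  · intro hθ
    have : NeZero (Nat.card (Wr G n) : 𝕜) := ⟨by rwa [natCard_wr, Ne, ringChar.spec]⟩
    refine MonoidAlgebra.mem_range_lift_of_forall_commute _ fun f hf => ?_
    exact Commute.span_right (by rintro _ ⟨Pg, rfl⟩; exact hθ Pg.1 Pg.2) f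
      (mem_phiSpan_of_forall_commute hf)
  · rintro ⟨x, rfl⟩ P g
    exact MonoidAlgebra.commute_lift_of_forall_commute _
      (fun γ => (commute_Phi_dActHom P g γ).symm) x

theorem double_centralizer (𝕜 : Type*) [Field 𝕜]
    (G : Type*) [Group G] [Fintype G] (n : ℕ) (hn : 1 ≤ n)
    (hchar : ¬ (ringChar 𝕜 ∣ Nat.factorial n * Fintype.card G ^ n)) (k : ℕ)
    (θ : ((Fin k → G × Fin n) →₀ 𝕜) →ₗ[𝕜] ((Fin k → G × Fin n) →₀ 𝕜)) :
    (∀ (P : Setoid (Fin k ⊕ Fin k)) (g : Fin k ⊕ Fin k → G),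
      θ ∘ₗ Phi G 𝕜 n P g = Phi G 𝕜 n P g ∘ₗ θ)
    ↔ θ ∈ (MonoidAlgebra.lift 𝕜 (Module.End 𝕜 ((Fin k → G × Fin n) →₀ 𝕜)) (Wr G n)
            (dActHom G 𝕜 n k)).range :=
  double_centralizer_general 𝕜 G n hchar k θ

end GPC
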